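/- If multi-edges e and e' incident on vertex v (with endpoints v,u and v,z, u ≠ z) are 1/ρ-bounded with respect to L, meaning w(e)·b_{v,u}ᵀ L⁺ b_{v,u} ≤ 1/ρ and w(e')·b_{v,z}ᵀ L⁺ b_{v,z} ≤ 1/ρ, then (w(e)w(e')/(w(e)+w(e'))) · b_{u,z}ᵀ L⁺ b_{u,z} ≤ 1/ρ; i.e., the clique edge formed from e and e' with weight w(e)w(e')/(w(e)+w(e')) is 1/ρ-bounded with respect to L. -/

import Mathlib

open Matrix

/-!
Write `b_{u,z} = b_{v,z} - b_{v,u}`; then `R(u,z) = R(v,u) + R(v,z)` minus the two cross terms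
`b_{v,u}ᵀ L⁺ b_{v,z}` and `b_{v,z}ᵀ L⁺ b_{v,u}`. Since the graph is connected, `ker L` is the
constants, so `L L⁺`, the orthogonal projection onto `(ker L)ᗮ`, fixes `b_{v,z}`, and
`φ = L⁺ b_{v,z}` solves `L φ = b_{v,z}`. Away from `v` this says that `φ` dominates the weighted
average of its neighbours, so by the minimum principle `φ` is minimal at `v` and
`b_{v,u}ᵀ φ = φ u - φ v ≥ 0`. This gives the triangle inequality for effective resistance, and
the clique weight `w w' / (w + w')` turns the two hypotheses into a convex combination of `1/ρ`.
-/

/-- The pair-vector `b_{u,v} = e_v - e_u`. -/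
def pairVec {V : Type*} [DecidableEq V] (u v : V) : V → ℝ :=
  fun i => (if i = v then 1 else 0) - (if i = u then 1 else 0)

section PairVec

variable {V : Type*} [DecidableEq V]

lemma pairVec_eq_sub (u v z : V) : pairVec u z = pairVec v z - pairVec v u := by
  funext i
  simp only [pairVec, Pi.sub_apply]
  ring

lemma eq_of_sub_mul_pairVec_apply_eq_zero {φ : V → ℝ} {x y i : V} (hi : i = x ∨ i = y)
    (h : (φ y - φ x) * pairVec x y i = 0) : φ x = φ y := by
  by_cases hxy : x = y
  · rw [hxy]
  rcases hi with rfl | rfl <;> simp [pairVec, hxy, Ne.symm hxy] at h <;> linarith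

lemma sub_mul_pairVec_apply_nonpos {φ : V → ℝ} {i : V} (hmin : ∀ k, φ i ≤ φ k) (x y : V) :
    (φ y - φ x) * pairVec x y i ≤ 0 := by
  have := hmin x
  have := hmin y
  simp only [pairVec]
  split_ifs <;> subst_vars <;> linarith

variable [Fintype V]

lemma pairVec_dotProduct (a b : V) (x : V → ℝ) : pairVec a b ⬝ᵥ x = x b - x a := by
  simp [pairVec, dotProduct, sub_mul, Finset.sum_sub_distrib]

lemma sum_pairVec (a b : V) : ∑ i, pairVec a b i = 0 := by
  simp [pairVec, Finset.sum_sub_distrib]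

end PairVec

lemma Relation.ReflTransGen.of_forall_imp {α : Type*} {r : α → α → Prop} {P : α → Prop}
    (hP : ∀ x y, r x y → P x → P y) {a b : α} (hab : Relation.ReflTransGen r a b) (ha : P a) :
    P b := by
  induction hab with
  | refl => exact ha
  | tail _ hxy ih => exact hP _ _ hxy ih

lemma mulVec_mulVec_eq_self_of_sum_eq_zero {V R : Type*} [Fintype V] [DecidableEq V]
    [CommRing R] {A G : Matrix V V R} (hA : Aᵀ = A) (hAGA : A * G * A = A)
    (hAG : (A * G)ᵀ = A * G) (hker : ∀ x, A *ᵥ x = 0 → ∀ a b, x a = x b)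
    {b : V → R} (hb : ∑ i, b i = 0) : A *ᵥ (G *ᵥ b) = b := by
  set M : Matrix V V R := 1 - A * G with hM
  have hMt : Mᵀ = M := by rw [hM, transpose_sub, transpose_one, hAG]
  have hAM : A * M = 0 := by
    have hMA : M * A = 0 := by rw [hM, sub_mul, one_mul, hAGA, sub_self]
    simpa only [transpose_mul, transpose_zero, hA, hMt] using congrArg transpose hMA
  have hcol : ∀ j i, M i j = M j j := fun j i =>
    hker (fun i => M i j) (funext fun k => mul_apply'.symm.trans (congrFun (congrFun hAM k) j)) i j
  have hMb : M *ᵥ b = 0 := by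
    rw [← vecMul_transpose, hMt]
    funext j
    simp [vecMul, dotProduct, hcol j, ← Finset.sum_mul, hb]
  calc A *ᵥ (G *ᵥ b) = b - M *ᵥ b := by
        rw [hM, sub_mulVec, one_mulVec, mulVec_mulVec, sub_sub_cancel]
    _ = b := by rw [hMb, sub_zero]

section Multigraph

variable {V E : Type*} [Fintype E] [DecidableEq V] (ends : E → V × V) (w : E → ℝ)

def multigraphLaplacian : Matrix V V ℝ :=
  ∑ e, w e • vecMulVec (pairVec (ends e).1 (ends e).2) (pairVec (ends e).1 (ends e).2)

def edgeAdj (x y : V) : Prop := ∃ e, ends e = (x, y) ∨ ends e = (y, x)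

lemma multigraphLaplacian_transpose :
    (multigraphLaplacian ends w)ᵀ = multigraphLaplacian ends w := by
  simp only [multigraphLaplacian, transpose_sum, transpose_smul, transpose_vecMulVec]

variable [Fintype V]

lemma multigraphLaplacian_mulVec (x : V → ℝ) :
    multigraphLaplacian ends w *ᵥ x =
      ∑ e, (w e * (x (ends e).2 - x (ends e).1)) • pairVec (ends e).1 (ends e).2 := by
  simp only [multigraphLaplacian, sum_mulVec, smul_mulVec, vecMulVec_mulVec, pairVec_dotProduct,
    op_smul_eq_smul, smul_smul]

lemma dotProduct_multigraphLaplacian_mulVec (x : V → ℝ) :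
    x ⬝ᵥ multigraphLaplacian ends w *ᵥ x = ∑ e, w e * (x (ends e).2 - x (ends e).1) ^ 2 := by
  rw [multigraphLaplacian_mulVec, dotProduct_comm, sum_dotProduct]
  simp only [smul_dotProduct, pairVec_dotProduct, smul_eq_mul]
  exact Finset.sum_congr rfl fun e _ => by ring

variable {ends w}

lemma apply_eq_of_multigraphLaplacian_mulVec_eq_zero (hw : ∀ e, 0 < w e)
    (hconn : ∀ a b, Relation.ReflTransGen (edgeAdj ends) a b) {x : V → ℝ}
    (hx : multigraphLaplacian ends w *ᵥ x = 0) (a b : V) : x a = x b := by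
  have hedge : ∀ e, x (ends e).1 = x (ends e).2 := by
    have hsum := dotProduct_multigraphLaplacian_mulVec ends w x
    rw [hx, dotProduct_zero, eq_comm, Finset.sum_eq_zero_iff_of_nonneg
      fun e _ => mul_nonneg (hw e).le (sq_nonneg _)] at hsum
    intro e
    have := hsum e (Finset.mem_univ e)
    rw [mul_eq_zero, or_iff_right (hw e).ne', sq_eq_zero_iff, sub_eq_zero] at this
    exact this.symm
  refine (hconn a b).of_forall_imp (P := fun y => x a = x y) ?_ rfl
  rintro y y' ⟨e, he | he⟩ hy
  · exact hy.trans (by simpa only [he] using hedge e)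
  · exact hy.trans (by simpa only [he] using (hedge e).symm)

lemma apply_eq_of_isMin_of_multigraphLaplacian_mulVec_nonneg (hw : ∀ e, 0 < w e)
    {φ : V → ℝ} {i j : V} (hmin : ∀ k, φ i ≤ φ k)
    (hi : 0 ≤ (multigraphLaplacian ends w *ᵥ φ) i) (hij : edgeAdj ends i j) : φ i = φ j := by
  rw [multigraphLaplacian_mulVec, Finset.sum_apply] at hi
  simp only [Pi.smul_apply, smul_eq_mul, mul_assoc] at hi
  have hnonpos : ∀ e ∈ Finset.univ,
      w e * ((φ (ends e).2 - φ (ends e).1) * pairVec (ends e).1 (ends e).2 i) ≤ 0 :=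
    fun e _ => mul_nonpos_of_nonneg_of_nonpos (hw e).le (sub_mul_pairVec_apply_nonpos hmin _ _)
  have hzero := (Finset.sum_eq_zero_iff_of_nonpos hnonpos).1
    (le_antisymm (Finset.sum_nonpos hnonpos) hi)
  obtain ⟨e, he | he⟩ := hij
  · have := hzero e (Finset.mem_univ e)
    exact eq_of_sub_mul_pairVec_apply_eq_zero (Or.inl rfl)
      (by simpa only [he] using (mul_eq_zero.1 this).resolve_left (hw e).ne')
  · have := hzero e (Finset.mem_univ e)
    exact (eq_of_sub_mul_pairVec_apply_eq_zero (Or.inr rfl)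
      (by simpa only [he] using (mul_eq_zero.1 this).resolve_left (hw e).ne')).symm

theorem apply_le_of_multigraphLaplacian_mulVec_nonneg (hw : ∀ e, 0 < w e)
    (hconn : ∀ a b, Relation.ReflTransGen (edgeAdj ends) a b) {φ : V → ℝ} {p : V}
    (h : ∀ i ≠ p, 0 ≤ (multigraphLaplacian ends w *ᵥ φ) i) (i : V) : φ p ≤ φ i := by
  obtain ⟨i₀, -, hi₀⟩ := Finset.exists_min_image Finset.univ φ ⟨p, Finset.mem_univ p⟩
  suffices hp : φ p = φ i₀ from hp ▸ hi₀ i (Finset.mem_univ i)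
  by_contra hp
  refine hp <| (hconn i₀ p).of_forall_imp (P := fun x => φ x = φ i₀) (fun x y hxy hx => ?_) rfl
  have hmin : ∀ k, φ x ≤ φ k := fun k => hx ▸ hi₀ k (Finset.mem_univ k)
  have hxp : x ≠ p := by rintro rfl; exact hp hx
  rw [← hx]
  exact (apply_eq_of_isMin_of_multigraphLaplacian_mulVec_nonneg hw hmin (h x hxp) hxy).symm

end Multigraph

section EffectiveResistance

variable {V E : Type*} [Fintype V] [Fintype E] [DecidableEq V] {ends : E → V × V} {w : E → ℝ}
  {Lp : Matrix V V ℝ}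

def effectiveResistance (Lp : Matrix V V ℝ) (a b : V) : ℝ :=
  pairVec a b ⬝ᵥ Lp *ᵥ pairVec a b

lemma multigraphLaplacian_mulVec_mulVec_pairVec (hw : ∀ e, 0 < w e)
    (hconn : ∀ a b, Relation.ReflTransGen (edgeAdj ends) a b)
    (hLp1 : multigraphLaplacian ends w * Lp * multigraphLaplacian ends w =
      multigraphLaplacian ends w)
    (hLp3 : (multigraphLaplacian ends w * Lp)ᵀ = multigraphLaplacian ends w * Lp) (p q : V) :
    multigraphLaplacian ends w *ᵥ (Lp *ᵥ pairVec p q) = pairVec p q :=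
  mulVec_mulVec_eq_self_of_sum_eq_zero (multigraphLaplacian_transpose ends w) hLp1 hLp3
    (fun _ hx => apply_eq_of_multigraphLaplacian_mulVec_eq_zero hw hconn hx) (sum_pairVec p q)

-- `Lp *ᵥ pairVec p q` is the potential of a unit current from `q` to `p`, minimal at `p`.
lemma pairVec_dotProduct_mulVec_pairVec_nonneg (hw : ∀ e, 0 < w e)
    (hconn : ∀ a b, Relation.ReflTransGen (edgeAdj ends) a b)
    (hLp1 : multigraphLaplacian ends w * Lp * multigraphLaplacian ends w =
      multigraphLaplacian ends w)
    (hLp3 : (multigraphLaplacian ends w * Lp)ᵀ = multigraphLaplacian ends w * Lp) (p a q : V) :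
    0 ≤ pairVec p a ⬝ᵥ Lp *ᵥ pairVec p q := by
  rw [pairVec_dotProduct, sub_nonneg]
  refine apply_le_of_multigraphLaplacian_mulVec_nonneg hw hconn (fun i hi => ?_) a
  rw [multigraphLaplacian_mulVec_mulVec_pairVec hw hconn hLp1 hLp3]
  simp only [pairVec, hi, if_false, sub_zero]
  positivity

theorem effectiveResistance_le_add (hw : ∀ e, 0 < w e)
    (hconn : ∀ a b, Relation.ReflTransGen (edgeAdj ends) a b)
    (hLp1 : multigraphLaplacian ends w * Lp * multigraphLaplacian ends w =
      multigraphLaplacian ends w)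
    (hLp3 : (multigraphLaplacian ends w * Lp)ᵀ = multigraphLaplacian ends w * Lp) (u v z : V) :
    effectiveResistance Lp u z ≤ effectiveResistance Lp v u + effectiveResistance Lp v z := by
  have hzu := pairVec_dotProduct_mulVec_pairVec_nonneg hw hconn hLp1 hLp3 v z u
  have huz := pairVec_dotProduct_mulVec_pairVec_nonneg hw hconn hLp1 hLp3 v u z
  have hexpand : effectiveResistance Lp u z =
      effectiveResistance Lp v u + effectiveResistance Lp v z
        - pairVec v z ⬝ᵥ Lp *ᵥ pairVec v u - pairVec v u ⬝ᵥ Lp *ᵥ pairVec v z := by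
    simp only [effectiveResistance, pairVec_eq_sub u v z, mulVec_sub, sub_dotProduct,
      dotProduct_sub]
    ring
  linarith

end EffectiveResistance

lemma mul_div_add_mul_le_of_le_add {a b x s t r : ℝ} (ha : 0 < a) (hb : 0 < b)
    (hx : x ≤ s + t) (hs : a * s ≤ r) (ht : b * t ≤ r) : a * b / (a + b) * x ≤ r := by
  have hab : 0 < a + b := add_pos ha hb
  calc a * b / (a + b) * x ≤ a * b / (a + b) * (s + t) := by gcongr
    _ = b / (a + b) * (a * s) + a / (a + b) * (b * t) := by field_simp
    _ ≤ b / (a + b) * r + a / (a + b) * r := by gcongr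
    _ = r := by field_simp; ring

theorem clique_edge_leverage_bound_general
    {V E : Type*} [Fintype V] [Fintype E] [DecidableEq V]
    (ends : E → V × V) (w : E → ℝ) (hw : ∀ e, 0 < w e)
    (hconn : ∀ a b : V, Relation.ReflTransGen
      (fun x y => ∃ e, ends e = (x, y) ∨ ends e = (y, x)) a b)
    (L : Matrix V V ℝ)
    (hL : L = ∑ e, w e • Matrix.vecMulVec
      (pairVec (ends e).1 (ends e).2) (pairVec (ends e).1 (ends e).2))
    (Lp : Matrix V V ℝ)
    (hLp1 : L * Lp * L = L)
    (hLp3 : (L * Lp)ᵀ = L * Lp)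
    (u v z : V)
    (we we' ρ : ℝ) (hwe : 0 < we) (hwe' : 0 < we')
    (hbound1 : we * (pairVec v u ⬝ᵥ Lp.mulVec (pairVec v u)) ≤ 1 / ρ)
    (hbound2 : we' * (pairVec v z ⬝ᵥ Lp.mulVec (pairVec v z)) ≤ 1 / ρ) :
    (we * we' / (we + we')) * (pairVec u z ⬝ᵥ Lp.mulVec (pairVec u z)) ≤ 1 / ρ := by
  subst hL
  exact mul_div_add_mul_le_of_le_add hwe hwe'
    (effectiveResistance_le_add hw hconn hLp1 hLp3 u v z) hbound1 hbound2

/-- If multi-edges `e, e'` incident on `v` (with endpoints `v,u` and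
`v,z`, `u ≠ z`), having weights `we, we' > 0`, are `1/ρ`-bounded w.r.t. the Laplacian `L`
of a connected weighted multigraph, i.e. `we • b_{v,u}ᵀ L⁺ b_{v,u} ≤ 1/ρ` and
`we' • b_{v,z}ᵀ L⁺ b_{v,z} ≤ 1/ρ`, then the clique edge formed from `e` and `e'`, with
weight `we·we'/(we+we')`, is `1/ρ`-bounded w.r.t. `L`:
`(we·we'/(we+we')) • b_{u,z}ᵀ L⁺ b_{u,z} ≤ 1/ρ`. -/
theorem clique_edge_leverage_bound
    {V E : Type*} [Fintype V] [Fintype E] [DecidableEq V]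
    (ends : E → V × V) (w : E → ℝ) (hw : ∀ e, 0 < w e)
    (hconn : ∀ a b : V, Relation.ReflTransGen
      (fun x y => ∃ e, ends e = (x, y) ∨ ends e = (y, x)) a b)
    (L : Matrix V V ℝ)
    (hL : L = ∑ e, w e • Matrix.vecMulVec
      (pairVec (ends e).1 (ends e).2) (pairVec (ends e).1 (ends e).2))
    (Lp : Matrix V V ℝ)
    (hLp1 : L * Lp * L = L) (hLp2 : Lp * L * Lp = Lp)
    (hLp3 : (L * Lp)ᵀ = L * Lp) (hLp4 : (Lp * L)ᵀ = Lp * L)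
    (u v z : V) (huv : u ≠ v) (hvz : v ≠ z) (huz : u ≠ z)
    (we we' ρ : ℝ) (hwe : 0 < we) (hwe' : 0 < we') (hρ : 0 < ρ)
    (hbound1 : we * (pairVec v u ⬝ᵥ Lp.mulVec (pairVec v u)) ≤ 1 / ρ)
    (hbound2 : we' * (pairVec v z ⬝ᵥ Lp.mulVec (pairVec v z)) ≤ 1 / ρ) :
    (we * we' / (we + we')) * (pairVec u z ⬝ᵥ Lp.mulVec (pairVec u z)) ≤ 1 / ρ :=
  clique_edge_leverage_bound_general ends w hw hconn L hL Lp hLp1 hLp3 u v z we we' ρ hwe hwe'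
    hbound1 hbound2
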